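/- arXiv:math/0509327 — 2 statements merged into one kernel-verified Lean document; each statement's English description precedes it below -/
import Mathlib

section
/- Let A : H1 → H2 be (S,T)-complementable. Then R(A/(S,T)) = R(A) ∩ T and N(A/(S,T)) = S⊥ + N(A). -/
open ContinuousLinearMap Submodule

noncomputable def projC {H : Type*} [NormedAddCommGroup H] [InnerProductSpace ℂ H]
    [CompleteSpace H] (S : Submodule ℂ H) [CompleteSpace S] : H →L[ℂ] H :=
  S.subtypeL ∘L orthogonalProjection S

variable {H₁ H₂ : Type*} [NormedAddCommGroup H₁] [InnerProductSpace ℂ H₁] [CompleteSpace H₁]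
  [NormedAddCommGroup H₂] [InnerProductSpace ℂ H₂] [CompleteSpace H₂]

noncomputable def blk11 (S : Submodule ℂ H₁) [CompleteSpace S]
    (T : Submodule ℂ H₂) [CompleteSpace T] (A : H₁ →L[ℂ] H₂) : H₁ →L[ℂ] H₂ :=
  projC T ∘L A ∘L projC S

noncomputable def blk12 (S : Submodule ℂ H₁) [CompleteSpace S]
    (T : Submodule ℂ H₂) [CompleteSpace T] (A : H₁ →L[ℂ] H₂) : H₁ →L[ℂ] H₂ :=
  projC T ∘L A ∘L (1 - projC S)

noncomputable def blk21 (S : Submodule ℂ H₁) [CompleteSpace S]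
    (T : Submodule ℂ H₂) [CompleteSpace T] (A : H₁ →L[ℂ] H₂) : H₁ →L[ℂ] H₂ :=
  (1 - projC T) ∘L A ∘L projC S

noncomputable def blk22 (S : Submodule ℂ H₁) [CompleteSpace S]
    (T : Submodule ℂ H₂) [CompleteSpace T] (A : H₁ →L[ℂ] H₂) : H₁ →L[ℂ] H₂ :=
  (1 - projC T) ∘L A ∘L (1 - projC S)

/-- `As` is the bilateral shorted operator `A/(S,T)`: there are `Bh = |A22|^(1/2)`,
`Dh = |A22*|^(1/2)` (unique positive fourth roots of `A22* A22` resp. `A22 A22*`),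
`U` the partial isometry of the polar decomposition of `A22`, and `E`, `F` the reduced
Douglas solutions of `A21 = |A22*|^(1/2) U X` and `A12* = |A22|^(1/2) X`, with
`As = A11 - F* E`. -/
def IsShorted (S : Submodule ℂ H₁) [CompleteSpace S] (T : Submodule ℂ H₂) [CompleteSpace T]
    (A As : H₁ →L[ℂ] H₂) : Prop :=
  ∃ (Bh : H₁ →L[ℂ] H₁) (Dh : H₂ →L[ℂ] H₂) (U : H₁ →L[ℂ] H₂) (E : H₁ →L[ℂ] H₁)
      (F : H₂ →L[ℂ] H₁),
    Bh.IsPositive ∧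
    Bh ∘L Bh ∘L Bh ∘L Bh = adjoint (blk22 S T A) ∘L blk22 S T A ∧
    Dh.IsPositive ∧
    Dh ∘L Dh ∘L Dh ∘L Dh = blk22 S T A ∘L adjoint (blk22 S T A) ∧
    blk22 S T A = U ∘L (Bh ∘L Bh) ∧
    (∀ x, blk22 S T A x = 0 → U x = 0) ∧
    (Dh ∘L U) ∘L E = blk21 S T A ∧
    LinearMap.range (E : H₁ →ₗ[ℂ] H₁) ≤ (LinearMap.ker ((Dh ∘L U : H₁ →L[ℂ] H₂) : H₁ →ₗ[ℂ] H₂))ᗮ ∧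
    Bh ∘L F = adjoint (blk12 S T A) ∧
    LinearMap.range (F : H₂ →ₗ[ℂ] H₁) ≤ (LinearMap.ker (Bh : H₁ →ₗ[ℂ] H₁))ᗮ ∧
    As = blk11 S T A - adjoint F ∘L E

/-- `A` is `(S,T)`-complementable. -/
def IsComplementable (S : Submodule ℂ H₁) [CompleteSpace S] (T : Submodule ℂ H₂)
    [CompleteSpace T] (A : H₁ →L[ℂ] H₂) : Prop :=
  LinearMap.range (blk21 S T A : H₁ →ₗ[ℂ] H₂) ≤ LinearMap.range (blk22 S T A : H₁ →ₗ[ℂ] H₂) ∧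
  LinearMap.range (adjoint (blk12 S T A) : H₂ →ₗ[ℂ] H₁) ≤ LinearMap.range (adjoint (blk22 S T A) : H₂ →ₗ[ℂ] H₁)

/-!
From the data in `IsShorted` one gets `U* Dh U = Bh`, since both sides are positive fourth roots
of `A22* A22`, and `U* A22 = Bh²`. Hence `A22 w = A21 x` forces `Bh (E x) = Bh² w`, so
`F* E x = A12 w` and `A/(S,T) x = A11 x - A12 w = A (P x - (1 - P) w)` with `P = projC S`,
a vector of `R(A) ∩ T`.
Complementability provides such a `w` for every `x`; this gives `R(A/(S,T)) ⊆ R(A) ∩ T` and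
`N(A/(S,T)) ⊆ S⊥ + N(A)`. Conversely `A/(S,T)` vanishes on `S⊥` (take `w = 0`) and agrees with `A`
at every `u` with `A u ∈ T`, because `N(A22) ⊆ N(A12)`.
-/

open scoped InnerProductSpace

lemma ContinuousLinearMap.IsPositive.eq_of_pow_four_eq {p q : H₁ →L[ℂ] H₁} (hp : p.IsPositive)
    (hq : q.IsPositive) (h : p ^ 4 = q ^ 4) : p = q := by
  rw [← nonneg_iff_isPositive] at hp hq
  have h2 : (p ^ 2) ^ 2 = (q ^ 2) ^ 2 := by rwa [← pow_mul, ← pow_mul]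
  rwa [CFC.sq_eq_sq_iff (p ^ 2) (q ^ 2), CFC.sq_eq_sq_iff p q] at h2

lemma ker_eq_ker_of_comp_self_eq_adjoint_comp_self {B : H₁ →L[ℂ] H₁} {C : H₁ →L[ℂ] H₂}
    (hB : IsSelfAdjoint B) (hBC : B ∘L B = adjoint C ∘L C) : B.ker = C.ker := by
  rw [← C.ker_adjoint_comp_self, ← hBC]
  conv_lhs => rw [← B.ker_adjoint_comp_self, isSelfAdjoint_iff'.mp hB]

lemma ker_le_ker_of_range_adjoint_le {C G : H₁ →L[ℂ] H₂}
    (h : (adjoint G).range ≤ (adjoint C).range) : C.ker ≤ G.ker := by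
  simpa only [orthogonal_range, adjoint_adjoint] using Submodule.orthogonal_le h

lemma adjoint_comp_eq_of_comp_eq_adjoint {B : H₁ →L[ℂ] H₁} {F : H₂ →L[ℂ] H₁} {G : H₁ →L[ℂ] H₂}
    (hB : IsSelfAdjoint B) (hF : B ∘L F = adjoint G) : adjoint F ∘L B = G := by
  rw [← adjoint_adjoint G, ← hF, adjoint_comp, isSelfAdjoint_iff'.mp hB]

lemma adjoint_apply_eq_of_range_le_orthogonal_ker {B : H₁ →L[ℂ] H₁} {F : H₂ →L[ℂ] H₁}
    (hF : F.range ≤ B.kerᗮ) {y y' : H₁} (h : B y = B y') : adjoint F y = adjoint F y' := by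
  have hker : y - y' ∈ (adjoint F).ker := by
    rw [← orthogonal_range]
    refine Submodule.orthogonal_le hF (B.ker.le_orthogonal_orthogonal ?_)
    simp [h]
  simpa [sub_eq_zero] using hker

lemma isSelfAdjoint_comp_self {p : H₁ →L[ℂ] H₁} (hp : IsSelfAdjoint p) :
    IsSelfAdjoint (p ∘L p) :=
  isSelfAdjoint_iff'.mpr (by rw [adjoint_comp, isSelfAdjoint_iff'.mp hp])

section Polar

variable {C U : H₁ →L[ℂ] H₂} {B : H₁ →L[ℂ] H₁}

lemma adjoint_comp_eq_of_eq_comp (hB : IsSelfAdjoint B) (hBC : B ∘L B = adjoint C ∘L C)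
    (hCU : C = U ∘L B) (hU : C.ker ≤ U.ker) : adjoint U ∘L C = B := by
  ext x
  set e := adjoint U (C x) - B x
  have he_perp : e ∈ B.rangeᗮ := by
    rintro _ ⟨y, rfl⟩
    have hCy : C y = U (B y) := by rw [hCU]; rfl
    have hBBy : B (B y) = adjoint C (C y) := by rw [← comp_apply, hBC]; rfl
    calc ⟪B y, e⟫_ℂ = ⟪B y, adjoint U (C x)⟫_ℂ - ⟪B y, B x⟫_ℂ := inner_sub_right _ _ _
      _ = ⟪adjoint C (C y), x⟫_ℂ - ⟪B (B y), x⟫_ℂ := by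
        rw [adjoint_inner_right, ← hCy, ← adjoint_inner_left C, ← adjoint_inner_left B,
          isSelfAdjoint_iff'.mp hB]
      _ = 0 := by rw [hBBy, sub_self]
  have hBe : B e = 0 := by rwa [orthogonal_range, isSelfAdjoint_iff'.mp hB] at he_perp
  have hUe : U e = 0 := hU ((ker_eq_ker_of_comp_self_eq_adjoint_comp_self hB hBC).le hBe)
  have hee : ⟪e, e⟫_ℂ = 0 := calc
    ⟪e, e⟫_ℂ = ⟪e, adjoint U (C x)⟫_ℂ - ⟪e, B x⟫_ℂ := inner_sub_right _ _ _
    _ = ⟪U e, C x⟫_ℂ - ⟪B e, x⟫_ℂ := by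
      rw [adjoint_inner_right, ← adjoint_inner_right B, isSelfAdjoint_iff'.mp hB]
    _ = 0 := by rw [hUe, hBe, inner_zero_left, inner_zero_left, sub_self]
  exact sub_eq_zero.mp (inner_self_eq_zero.mp hee)

lemma adjoint_comp_eq_of_eq_comp' (hB : IsSelfAdjoint B) (hBC : B ∘L B = adjoint C ∘L C)
    (hCU : C = U ∘L B) (hU : C.ker ≤ U.ker) : adjoint C ∘L U = B := by
  rw [← isSelfAdjoint_iff'.mp hB, ← adjoint_comp_eq_of_eq_comp hB hBC hCU hU, adjoint_comp,
    adjoint_adjoint]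

lemma ker_adjoint_le_ker_adjoint_of_eq_comp (hB : IsSelfAdjoint B)
    (hBC : B ∘L B = adjoint C ∘L C) (hCU : C = U ∘L B) (hU : C.ker ≤ U.ker) :
    (adjoint C).ker ≤ (adjoint U).ker := by
  intro k hk
  have hBk : B (adjoint U k) = 0 := by
    rw [← comp_apply, ← isSelfAdjoint_iff'.mp hB, ← adjoint_comp, ← hCU]
    exact hk
  have hUk : U (adjoint U k) = 0 :=
    hU ((ker_eq_ker_of_comp_self_eq_adjoint_comp_self hB hBC).le hBk)
  have : ⟪adjoint U k, adjoint U k⟫_ℂ = 0 := by rw [adjoint_inner_right, hUk, inner_zero_left]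
  exact inner_self_eq_zero.mp this

lemma comp_adjoint_comp_eq_of_eq_comp {D : H₂ →L[ℂ] H₂} (hB : IsSelfAdjoint B)
    (hBC : B ∘L B = adjoint C ∘L C) (hCU : C = U ∘L B) (hU : C.ker ≤ U.ker)
    (hD : IsSelfAdjoint D) (hCD : (adjoint C).ker ≤ D.ker) : U ∘L adjoint U ∘L D = D := by
  have hCadjU := adjoint_comp_eq_of_eq_comp' hB hBC hCU hU
  have hBUadj : B ∘L adjoint U = adjoint C := by
    rw [hCU, adjoint_comp, isSelfAdjoint_iff'.mp hB]
  ext y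
  set e := U (adjoint U (D y)) - D y
  have hCe : adjoint C e = 0 := by
    have h1 : adjoint C (U (adjoint U (D y))) = B (adjoint U (D y)) := by rw [← hCadjU]; rfl
    have h2 : B (adjoint U (D y)) = adjoint C (D y) := by rw [← hBUadj]; rfl
    show adjoint C (U (adjoint U (D y)) - D y) = 0
    rw [map_sub, h1, h2, sub_self]
  have hDe : D e = 0 := hCD hCe
  have hUe : adjoint U e = 0 := ker_adjoint_le_ker_adjoint_of_eq_comp hB hBC hCU hU hCe
  have hee : ⟪e, e⟫_ℂ = 0 := calc
    ⟪e, e⟫_ℂ = ⟪U (adjoint U (D y)), e⟫_ℂ - ⟪D y, e⟫_ℂ := inner_sub_left _ _ _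
    _ = ⟪adjoint U (D y), adjoint U e⟫_ℂ - ⟪y, D e⟫_ℂ := by
      rw [← adjoint_inner_right, ← adjoint_inner_left D, isSelfAdjoint_iff'.mp hD]
    _ = 0 := by rw [hUe, hDe, inner_zero_right, inner_zero_right, sub_self]
  exact sub_eq_zero.mp (inner_self_eq_zero.mp hee)

lemma adjoint_comp_comp_eq_of_eq_comp {Bh : H₁ →L[ℂ] H₁} {Dh : H₂ →L[ℂ] H₂}
    (hBh : Bh.IsPositive) (hBC : (Bh ∘L Bh) ∘L (Bh ∘L Bh) = adjoint C ∘L C) (hDh : Dh.IsPositive)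
    (hDC : (Dh ∘L Dh) ∘L (Dh ∘L Dh) = C ∘L adjoint C) (hCU : C = U ∘L (Bh ∘L Bh))
    (hU : C.ker ≤ U.ker) : adjoint U ∘L Dh ∘L U = Bh := by
  have hB := isSelfAdjoint_comp_self hBh.isSelfAdjoint
  have hD := hDh.isSelfAdjoint
  have hkerD : (adjoint C).ker = Dh.ker := calc
    (adjoint C).ker = (Dh ∘L Dh).ker := (ker_eq_ker_of_comp_self_eq_adjoint_comp_self
      (isSelfAdjoint_comp_self hD) (by rwa [adjoint_adjoint])).symm
    _ = Dh.ker := by simpa only [isSelfAdjoint_iff'.mp hD] using Dh.ker_adjoint_comp_self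
  have hUUD (y : H₂) : U (adjoint U (Dh y)) = Dh y :=
    DFunLike.congr_fun (comp_adjoint_comp_eq_of_eq_comp hB hBC hCU hU hD hkerD.le) y
  have hUC (x : H₁) : adjoint U (C x) = Bh (Bh x) :=
    DFunLike.congr_fun (adjoint_comp_eq_of_eq_comp hB hBC hCU hU) x
  have hCadjU (x : H₁) : adjoint C (U x) = Bh (Bh x) :=
    DFunLike.congr_fun (adjoint_comp_eq_of_eq_comp' hB hBC hCU hU) x
  have hDC' (y : H₂) : Dh (Dh (Dh (Dh y))) = C (adjoint C y) := DFunLike.congr_fun hDC y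
  refine (hDh.adjoint_conj U).eq_of_pow_four_eq hBh (ContinuousLinearMap.ext fun x => ?_)
  simp only [pow_succ, pow_zero, one_mul, ContinuousLinearMap.mul_def, comp_apply]
  rw [hUUD, hUUD, hUUD, hDC', hCadjU, hUC]

end Polar

lemma one_sub_projC (S : Submodule ℂ H₁) [CompleteSpace S] : 1 - projC S = Sᗮ.starProjection :=
  (starProjection_orthogonal' S).symm

section Blocks

variable {S : Submodule ℂ H₁} [CompleteSpace S] {T : Submodule ℂ H₂} [CompleteSpace T]
  {A As : H₁ →L[ℂ] H₂}

lemma blk11_apply (x : H₁) : blk11 S T A x = T.starProjection (A (S.starProjection x)) := rfl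

lemma blk12_apply (x : H₁) : blk12 S T A x = T.starProjection (A (Sᗮ.starProjection x)) := by
  rw [blk12, one_sub_projC]; rfl

lemma blk21_apply (x : H₁) : blk21 S T A x = Tᗮ.starProjection (A (S.starProjection x)) := by
  rw [blk21, one_sub_projC]; rfl

lemma blk22_apply (x : H₁) : blk22 S T A x = Tᗮ.starProjection (A (Sᗮ.starProjection x)) := by
  rw [blk22, one_sub_projC, one_sub_projC]; rfl

lemma IsShorted.apply_eq_of_blk22_eq_blk21 (hAs : IsShorted S T A As) {x w : H₁}
    (h : blk22 S T A w = blk21 S T A x) : As x = blk11 S T A x - blk12 S T A w := by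
  obtain ⟨Bh, Dh, U, E, F, hBh, hBh4, hDh, hDh4, hCU, hU, hE, -, hF, hFrange, rfl⟩ := hAs
  have hB := isSelfAdjoint_comp_self hBh.isSelfAdjoint
  have hBC : (Bh ∘L Bh) ∘L (Bh ∘L Bh) = adjoint (blk22 S T A) ∘L blk22 S T A := by
    rwa [comp_assoc]
  have hDC : (Dh ∘L Dh) ∘L (Dh ∘L Dh) = blk22 S T A ∘L adjoint (blk22 S T A) := by
    rwa [comp_assoc]
  have hUDU := adjoint_comp_comp_eq_of_eq_comp hBh hBC hDh hDC hCU hU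
  have hBE : Bh (E x) = Bh (Bh w) := calc
    Bh (E x) = adjoint U (Dh (U (E x))) := (DFunLike.congr_fun hUDU (E x)).symm
    _ = adjoint U (blk22 S T A w) := by rw [h, ← hE]; rfl
    _ = Bh (Bh w) := DFunLike.congr_fun (adjoint_comp_eq_of_eq_comp hB hBC hCU hU) w
  have hFE : adjoint F (E x) = blk12 S T A w := by
    rw [adjoint_apply_eq_of_range_le_orthogonal_ker hFrange hBE, ← comp_apply,
      adjoint_comp_eq_of_comp_eq_adjoint hBh.isSelfAdjoint hF]
  rw [sub_apply, comp_apply, hFE]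

lemma IsShorted.apply_eq_zero_of_mem_orthogonal (hAs : IsShorted S T A As) {x : H₁}
    (hx : x ∈ Sᗮ) : As x = 0 := by
  have hPx : S.starProjection x = 0 := (starProjection_apply_eq_zero_iff S).mpr hx
  have h : blk22 S T A 0 = blk21 S T A x := by simp [blk21_apply, hPx]
  simp [hAs.apply_eq_of_blk22_eq_blk21 h, blk11_apply, hPx]

lemma IsShorted.exists_apply_eq (hAs : IsShorted S T A As) (hc : IsComplementable S T A)
    (x : H₁) : ∃ y, x - y ∈ Sᗮ ∧ A y ∈ T ∧ As x = A y := by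
  obtain ⟨w, hw⟩ : ∃ w, blk22 S T A w = blk21 S T A x := hc.1 ⟨x, rfl⟩
  have hAy : A (S.starProjection x - Sᗮ.starProjection w) ∈ T := by
    rw [← orthogonal_orthogonal T, ← starProjection_apply_eq_zero_iff, map_sub, map_sub,
      ← blk21_apply, ← blk22_apply, hw, sub_self]
  refine ⟨_, ?_, hAy, ?_⟩
  · have hxy : x - (S.starProjection x - Sᗮ.starProjection w) = Sᗮ.starProjection (x + w) := by
      rw [map_add]
      nth_rewrite 1 [← S.starProjection_add_starProjection_orthogonal x]
      abel
    rw [hxy]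
    exact starProjection_apply_mem _ _
  · rw [hAs.apply_eq_of_blk22_eq_blk21 hw, blk11_apply, blk12_apply, ← map_sub, ← map_sub,
      starProjection_eq_self_iff.mpr hAy]

lemma IsComplementable.apply_eq_zero_of_mem_orthogonal (hc : IsComplementable S T A) {v : H₁}
    (hv : v ∈ Sᗮ) (hAv : A v ∈ T) : A v = 0 := by
  have hPv : Sᗮ.starProjection v = v := starProjection_eq_self_iff.mpr hv
  have h22 : blk22 S T A v = 0 := by
    rwa [blk22_apply, hPv, starProjection_apply_eq_zero_iff, orthogonal_orthogonal]
  have h12 : blk12 S T A v = 0 := ker_le_ker_of_range_adjoint_le hc.2 h22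
  rwa [blk12_apply, hPv, starProjection_eq_self_iff.mpr hAv] at h12

lemma IsShorted.apply_eq_of_apply_mem (hAs : IsShorted S T A As) (hc : IsComplementable S T A)
    {u : H₁} (hu : A u ∈ T) : As u = A u := by
  obtain ⟨y, hy, hAy, hAsu⟩ := hAs.exists_apply_eq hc u
  have huy : A (u - y) = 0 :=
    hc.apply_eq_zero_of_mem_orthogonal hy (by rw [map_sub]; exact sub_mem hu hAy)
  rw [map_sub, sub_eq_zero] at huy
  rw [hAsu, huy]

end Blocks

theorem range_and_ker_of_shorted
    (S : Submodule ℂ H₁) [CompleteSpace S] (T : Submodule ℂ H₂) [CompleteSpace T]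
    (A As : H₁ →L[ℂ] H₂) (hc : IsComplementable S T A) (hAs : IsShorted S T A As) :
    LinearMap.range (As : H₁ →ₗ[ℂ] H₂) = LinearMap.range (A : H₁ →ₗ[ℂ] H₂) ⊓ T ∧
    LinearMap.ker (As : H₁ →ₗ[ℂ] H₂) = Sᗮ ⊔ LinearMap.ker (A : H₁ →ₗ[ℂ] H₂) := by
  constructor
  · ext z
    constructor
    · rintro ⟨x, rfl⟩
      obtain ⟨y, -, hAy, hxy⟩ := hAs.exists_apply_eq hc x
      exact ⟨⟨y, hxy.symm⟩, hxy ▸ hAy⟩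
    · rintro ⟨⟨u, rfl⟩, hu⟩
      exact ⟨u, hAs.apply_eq_of_apply_mem hc hu⟩
  · ext x
    constructor
    · intro hx
      obtain ⟨y, hxy, -, hAsx⟩ := hAs.exists_apply_eq hc x
      have hAy : A y = 0 := hAsx.symm.trans hx
      exact mem_sup.mpr ⟨x - y, hxy, y, hAy, sub_add_cancel x y⟩
    · intro hx
      obtain ⟨s, hs, k, hk, rfl⟩ := mem_sup.mp hx
      have hAk : A k = 0 := hk
      have hAsk : As k = 0 := (hAs.apply_eq_of_apply_mem hc (hAk ▸ T.zero_mem)).trans hAk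
      simp [LinearMap.mem_ker, hAs.apply_eq_zero_of_mem_orthogonal hs, hAsk]
end

section
/- Let A ∈ L(H) be a projection and S, T ⊆ H closed subspaces such that A is (S,T)-complementable. Then N(A) + S⊥ is closed, H = (R(A) ∩ T) ⊕ (N(A) + S⊥) (direct sum, not necessarily orthogonal), and A/(S,T) is the projection onto R(A) ∩ T along N(A) + S⊥. -/
/-!
By the Douglas factorisations in its definition, `A/(S,T) x = A₁₁ x - A₁₂ w` for every `w` with
`A₂₂ w = A₂₁ x`; in terms of `A` itself, `A/(S,T) x = A u` for every `u ∈ x + S⊥` with `A u ∈ T`,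
and such `u` exist by complementability. The Douglas step needs `|A₂₂*|^(1/2) U = U |A₂₂|^(1/2)`,
which follows from uniqueness of positive fourth roots once `U` is known to be isometric on the
range of `|A₂₂|^(1/2)`.

Choosing `u ∈ N(A)` shows `N(A/(S,T)) = N(A) + S⊥`, so this space is closed. If `A` is
idempotent, `A/(S,T)` maps into `R(A) ∩ T` and fixes it (take `u = x`), so it is the projection
onto `R(A) ∩ T` along its kernel.
-/

open ContinuousLinearMap Submodule

variable {H₁ H₂ : Type*} [NormedAddCommGroup H₁] [InnerProductSpace ℂ H₁] [CompleteSpace H₁]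
  [NormedAddCommGroup H₂] [InnerProductSpace ℂ H₂] [CompleteSpace H₂]

theorem projC_eq_starProjection (S : Submodule ℂ H₁) [CompleteSpace S] :
    projC S = S.starProjection :=
  rfl

theorem IsSelfAdjoint.apply_eq_zero_of_apply_apply_eq_zero {B : H₁ →L[ℂ] H₁}
    (hB : IsSelfAdjoint B) {x : H₁} (h : B (B x) = 0) : B x = 0 := by
  have := congr(x ∈ $(B.ker_adjoint_comp_self))
  simp_all [hB.adjoint_eq]

theorem ContinuousLinearMap.IsPositive.eq_of_pow_four_eq_s16 {P Q : H₁ →L[ℂ] H₁}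
    (hP : P.IsPositive) (hQ : Q.IsPositive) (h : P ∘L P ∘L P ∘L P = Q ∘L Q ∘L Q ∘L Q) :
    P = Q := by
  rw [← nonneg_iff_isPositive] at hP hQ
  have hsq : P * P = Q * Q := by
    rw [← CFC.sq_eq_sq_iff (P * P) (Q * Q), sq, sq, ← mul_assoc, ← mul_assoc]
    exact h
  rwa [← sq, ← sq, CFC.sq_eq_sq_iff P Q] at hsq

/-- The polar decomposition `R = U |R|` with `B = |R|^(1/2)`; `U` is only assumed to vanish on
`N(R)`. -/
structure IsPolarFactorization (R : H₁ →L[ℂ] H₂) (U : H₁ →L[ℂ] H₂) (B : H₁ →L[ℂ] H₁) : Prop where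
  isPositive : B.IsPositive
  pow_four_eq : B ∘L B ∘L B ∘L B = adjoint R ∘L R
  eq_comp : R = U ∘L (B ∘L B)
  apply_eq_zero : ∀ x, R x = 0 → U x = 0

namespace IsPolarFactorization

variable {R U : H₁ →L[ℂ] H₂} {B : H₁ →L[ℂ] H₁}

theorem inner_apply_apply (h : IsPolarFactorization R U B) (x z : H₁) :
    inner ℂ (R x) (R z) = inner ℂ (B (B x)) (B (B z)) := by
  have hsymm : ∀ a b, inner ℂ (B a) b = inner ℂ a (B b) := h.isPositive.isSelfAdjoint.isSymmetric
  rw [← adjoint_inner_right, ← comp_apply (adjoint R), ← h.pow_four_eq, hsymm, hsymm]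
  rfl

theorem adjoint_comp_self_comp_sq (h : IsPolarFactorization R U B) :
    adjoint U ∘L U ∘L (B ∘L B) = B ∘L B := by
  have hsymm : ∀ a b, inner ℂ (B a) b = inner ℂ a (B b) := h.isPositive.isSelfAdjoint.isSymmetric
  have hRx : ∀ x, R x = U (B (B x)) := fun x => by rw [h.eq_comp]; rfl
  ext x
  set d := adjoint U (U (B (B x))) - B (B x)
  have hd_perp : ∀ z, inner ℂ d (B (B z)) = 0 := fun z => by
    rw [inner_sub_left, adjoint_inner_left, ← hRx, ← hRx, h.inner_apply_apply, sub_self]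
  have hBd : B d = 0 := by
    rw [← inner_self_eq_zero (𝕜 := ℂ), hsymm]
    exact hd_perp d
  have hUd : U d = 0 := h.apply_eq_zero d (by rw [hRx, hBd, map_zero, map_zero])
  have hdd : inner ℂ d d = 0 := by
    nth_rewrite 1 [show d = adjoint U (U (B (B x))) - B (B x) from rfl]
    rw [inner_sub_left, adjoint_inner_left, hUd, hsymm, hBd, inner_zero_right, inner_zero_right,
      sub_self]
  exact sub_eq_zero.mp (inner_self_eq_zero.mp hdd)

theorem comp_adjoint_comp_self (h : IsPolarFactorization R U B) :
    B ∘L (adjoint U ∘L U) = B := by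
  have hB := h.isPositive.isSelfAdjoint
  have hsq := congrArg adjoint h.adjoint_comp_self_comp_sq
  simp only [adjoint_comp, adjoint_adjoint, hB.adjoint_eq] at hsq
  ext y
  have hBB : B (B (adjoint U (U y) - y)) = 0 := by
    simpa [sub_eq_zero] using congr($hsq y)
  exact sub_eq_zero.mp (by simpa using hB.apply_eq_zero_of_apply_apply_eq_zero hBB)

theorem adjoint_comp_self_comp (h : IsPolarFactorization R U B) : adjoint U ∘L U ∘L B = B := by
  simpa only [adjoint_comp, adjoint_adjoint, h.isPositive.isSelfAdjoint.adjoint_eq, comp_assoc]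
    using congrArg adjoint h.comp_adjoint_comp_self

theorem comp_eq_comp_of_pow_four_eq (h : IsPolarFactorization R U B) {D : H₂ →L[ℂ] H₂}
    (hD : D.IsPositive) (hD4 : D ∘L D ∘L D ∘L D = R ∘L adjoint R) : D ∘L U = U ∘L B := by
  have hB := h.isPositive
  have hBU : ∀ v, B (adjoint U (U v)) = B v := fun v => congr($h.comp_adjoint_comp_self v)
  have hD_eq : U ∘L B ∘L adjoint U = D := by
    refine (hB.conj_adjoint U).eq_of_pow_four_eq_s16 hD ?_
    rw [hD4, h.eq_comp]
    ext y
    simp only [comp_apply, adjoint_comp, hB.isSelfAdjoint.adjoint_eq, hBU]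
  ext v
  rw [← hD_eq]
  simp only [comp_apply, hBU]

end IsPolarFactorization

theorem blk22_eq_blk21_iff (S : Submodule ℂ H₁) [CompleteSpace S] (T : Submodule ℂ H₂)
    [CompleteSpace T] (A : H₁ →L[ℂ] H₂) {x w : H₁} :
    blk22 S T A w = blk21 S T A x ↔ A (projC S x - (w - projC S w)) ∈ T := by
  set y := A (projC S x - (w - projC S w))
  have hy : blk21 S T A x - blk22 S T A w = y - T.starProjection y := by
    simp only [y, blk21, blk22, projC_eq_starProjection, comp_apply, sub_apply,
      one_apply_eq_self, map_sub]
    abel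
  rw [eq_comm, ← sub_eq_zero, hy, sub_eq_zero, eq_comm, T.starProjection_eq_self_iff]

section Shorted

variable {S : Submodule ℂ H₁} [CompleteSpace S] {T : Submodule ℂ H₂} [CompleteSpace T]
  {A As : H₁ →L[ℂ] H₂}

theorem IsComplementable.exists_sub_mem_orthogonal_apply_mem (hc : IsComplementable S T A)
    (x : H₁) : ∃ u, u - x ∈ Sᗮ ∧ A u ∈ T := by
  obtain ⟨w, hw⟩ := hc.1 ⟨x, rfl⟩
  refine ⟨projC S x - (w - projC S w), ?_, (blk22_eq_blk21_iff S T A).mp hw⟩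
  convert Sᗮ.neg_mem (Sᗮ.add_mem (S.sub_starProjection_mem_orthogonal x)
    (S.sub_starProjection_mem_orthogonal w)) using 1
  simp only [projC_eq_starProjection]
  abel

theorem IsShorted.apply_eq_blk11_sub_blk12 (h : IsShorted S T A As) {x w : H₁}
    (hw : blk22 S T A w = blk21 S T A x) : As x = blk11 S T A x - blk12 S T A w := by
  obtain ⟨B, D, U, E, F, hB, hB4, hD, hD4, hR, hU, hE, -, hF, hFB, rfl⟩ := h
  have hP : IsPolarFactorization (blk22 S T A) U B := ⟨hB, hB4, hR, hU⟩
  have hBEw : B (E x - B w) = 0 :=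
    calc B (E x - B w) = (adjoint U ∘L U ∘L B) (E x - B w) := by rw [hP.adjoint_comp_self_comp]
      _ = adjoint U (((D ∘L U) ∘L E) x - (U ∘L (B ∘L B)) w) := by
          rw [hP.comp_eq_comp_of_pow_four_eq hD hD4]; simp only [comp_apply, map_sub]
      _ = 0 := by rw [hE, ← hR, hw, sub_self, map_zero]
  have hker : LinearMap.ker (B : H₁ →ₗ[ℂ] H₁) ≤ LinearMap.ker (adjoint F : H₁ →ₗ[ℂ] H₂) :=
    (Submodule.le_orthogonal_orthogonal _).trans
      (F.orthogonal_range ▸ Submodule.orthogonal_le hFB)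
  have hFE : adjoint F (E x) = adjoint F (B w) :=
    sub_eq_zero.mp (by simpa using hker hBEw)
  have hFBw : adjoint F (B w) = blk12 S T A w := by
    rw [← comp_apply, ← hB.isSelfAdjoint.adjoint_eq, ← adjoint_comp, hF, adjoint_adjoint]
  rw [sub_apply, comp_apply, hFE, hFBw]

theorem IsShorted.apply_eq_of_sub_mem_orthogonal (h : IsShorted S T A As) {x u : H₁}
    (hu : u - x ∈ Sᗮ) (hAu : A u ∈ T) : As x = A u := by
  set w := projC S x - u
  have hw : w ∈ Sᗮ := by
    convert Sᗮ.neg_mem (Sᗮ.add_mem (S.sub_starProjection_mem_orthogonal x) hu) using 1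
    simp only [w, projC_eq_starProjection]
    abel
  have hPw : projC S w = 0 := S.starProjection_apply_eq_zero_iff.mpr hw
  have hu_eq : projC S x - (w - projC S w) = u := by rw [hPw, sub_zero, sub_sub_cancel]
  have hwx : blk22 S T A w = blk21 S T A x := (blk22_eq_blk21_iff S T A).mpr (hu_eq ▸ hAu)
  calc As x = projC T (A (projC S x - (w - projC S w))) := by
        simp only [h.apply_eq_blk11_sub_blk12 hwx, blk11, blk12, comp_apply, sub_apply,
          one_apply_eq_self, map_sub]
    _ = A u := by rw [hu_eq, projC_eq_starProjection, T.starProjection_eq_self_iff.mpr hAu]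

theorem IsShorted.ker_eq_ker_sup_orthogonal (hc : IsComplementable S T A)
    (hAs : IsShorted S T A As) :
    LinearMap.ker (As : H₁ →ₗ[ℂ] H₂) = LinearMap.ker (A : H₁ →ₗ[ℂ] H₂) ⊔ Sᗮ := by
  apply le_antisymm
  · intro x hx
    obtain ⟨u, hu, hAu⟩ := hc.exists_sub_mem_orthogonal_apply_mem x
    have hu_ker : u ∈ LinearMap.ker (A : H₁ →ₗ[ℂ] H₂) := by
      rwa [LinearMap.mem_ker, coe_coe, hAs.apply_eq_of_sub_mem_orthogonal hu hAu] at hx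
    simpa using Submodule.sub_mem_sup hu_ker hu
  · intro v hv
    obtain ⟨y, hy, z, hz, rfl⟩ := Submodule.mem_sup.mp hv
    have hAy : A y = 0 := hy
    rw [LinearMap.mem_ker, coe_coe,
      hAs.apply_eq_of_sub_mem_orthogonal (u := y) (by simpa using Sᗮ.neg_mem hz) (hAy ▸ T.zero_mem),
      hAy]

end Shorted

theorem IsShorted.isProj_range_inf {H : Type*} [NormedAddCommGroup H] [InnerProductSpace ℂ H]
    [CompleteSpace H] {A As : H →L[ℂ] H} {S : Submodule ℂ H} [CompleteSpace S]
    {T : Submodule ℂ H} [CompleteSpace T] (hA : IsIdempotentElem A)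
    (hc : IsComplementable S T A) (hAs : IsShorted S T A As) :
    LinearMap.IsProj (LinearMap.range (A : H →ₗ[ℂ] H) ⊓ T) (As : H →ₗ[ℂ] H) := by
  refine ⟨fun x => ?_, fun v hv => ?_⟩
  · obtain ⟨u, hu, hAu⟩ := hc.exists_sub_mem_orthogonal_apply_mem x
    rw [coe_coe, hAs.apply_eq_of_sub_mem_orthogonal hu hAu]
    exact ⟨LinearMap.mem_range_self _ u, hAu⟩
  · obtain ⟨⟨a, rfl⟩, hT⟩ := hv
    have hAa : A (A a) = A a := congr($hA a)
    show As (A a) = A a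
    rw [hAs.apply_eq_of_sub_mem_orthogonal (u := A a) (by simp) (hAa.symm ▸ hT), hAa]

theorem shorted_of_projection
    {H : Type*} [NormedAddCommGroup H] [InnerProductSpace ℂ H] [CompleteSpace H]
    (A : H →L[ℂ] H) (hA : IsIdempotentElem A)
    (S : Submodule ℂ H) [CompleteSpace S] (T : Submodule ℂ H) [CompleteSpace T]
    (hc : IsComplementable S T A) (As : H →L[ℂ] H) (hAs : IsShorted S T A As) :
    IsClosed ((LinearMap.ker (A : H →ₗ[ℂ] H) ⊔ Sᗮ : Submodule ℂ H) : Set H) ∧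
    IsCompl (LinearMap.range (A : H →ₗ[ℂ] H) ⊓ T) (LinearMap.ker (A : H →ₗ[ℂ] H) ⊔ Sᗮ) ∧
    IsIdempotentElem As ∧
    LinearMap.range (As : H →ₗ[ℂ] H) = LinearMap.range (A : H →ₗ[ℂ] H) ⊓ T ∧
    LinearMap.ker (As : H →ₗ[ℂ] H) = LinearMap.ker (A : H →ₗ[ℂ] H) ⊔ Sᗮ := by
  have hproj := hAs.isProj_range_inf hA hc
  have hker := hAs.ker_eq_ker_sup_orthogonal hc
  refine ⟨hker ▸ As.isClosed_ker, hker ▸ hproj.isCompl, ?_, hproj.range, hker⟩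
  ext x
  exact congr($(hproj.isIdempotentElem.eq) x)
end
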